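/- arXiv:1106.2657 — 3 statements merged into one kernel-verified Lean document; each statement's English description precedes it below -/
import Mathlib

section
/- Value of information is nonnegative: suppose that for every cell k with P(k) > 0 the set {E[u_a | k] : a ∈ A} is bounded above, and that the set {E[u_a] : a ∈ A} is bounded above. Then Σ_{k : P(k) > 0} P(k) · (sup_{a ∈ A} E[u_a | k]) ≥ sup_{a ∈ A} E[u_a]; that is, the expected expected utility of choosing the best action after learning which cell of the partition the true state lies in is at least the expected utility of the best action chosen without the information, so the value of information of the partition is nonnegative. -/
open Finset

/-- Value of information is nonnegative: the expected expected utility of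
choosing the best action after learning the cell of the partition is at
least the expected utility of the best action chosen without the
information. -/
theorem value_of_information_nonneg
    {Ω K A : Type*} [Fintype Ω] [Nonempty Ω] [Fintype K] [DecidableEq K] [Nonempty A]
    (p : Ω → ℝ) (hp : ∀ ω, 0 ≤ p ω) (hpsum : ∑ ω, p ω = 1)
    (u : A → Ω → ℝ) (Q : Ω → K)
    -- the probability of a cell
    (P : K → ℝ) (hP : ∀ k, P k = ∑ ω ∈ univ.filter (fun ω => Q ω = k), p ω)
    -- the conditional expected utility of action a given cell k (for P k > 0)
    (condE : A → K → ℝ)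
    (hcondE : ∀ a k, 0 < P k →
      condE a k = (∑ ω ∈ univ.filter (fun ω => Q ω = k), p ω * u a ω) / P k)
    -- boundedness hypotheses
    (hbdd : ∀ k, 0 < P k → BddAbove (Set.range (fun a : A => condE a k)))
    (hbdd' : BddAbove (Set.range (fun a : A => ∑ ω, p ω * u a ω))) :
    (⨆ a : A, ∑ ω, p ω * u a ω) ≤
      ∑ k ∈ univ.filter (fun k => 0 < P k), P k * (⨆ a : A, condE a k) := by
  apply ciSup_le
  intro a
  have key : ∑ ω, p ω * u a ω =
      ∑ k ∈ univ.filter (fun k => 0 < P k), P k * condE a k := by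
    rw [← Finset.sum_fiberwise (g := Q) (f := fun ω => p ω * u a ω)]
    rw [← Finset.sum_filter_add_sum_filter_not univ (fun k => 0 < P k)]
    have hz : ∑ k ∈ univ.filter (fun k => ¬ 0 < P k),
        (∑ ω ∈ univ.filter (fun ω => Q ω = k), p ω * u a ω) = 0 := by
      apply Finset.sum_eq_zero
      intro k hk
      simp only [Finset.mem_filter] at hk
      have hPk : P k = 0 := by
        have h0 : 0 ≤ P k := by
          rw [hP k]; exact Finset.sum_nonneg fun ω _ => hp ω
        linarith [not_lt.mp hk.2]
      apply Finset.sum_eq_zero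
      intro ω hω
      have : p ω = 0 := by
        have := (Finset.sum_eq_zero_iff_of_nonneg (fun ω _ => hp ω)).mp
          ((hP k) ▸ hPk) ω hω
        exact this
      simp [this]
    rw [hz, add_zero]
    apply Finset.sum_congr rfl
    intro k hk
    simp only [Finset.mem_filter] at hk
    rw [hcondE a k hk.2, mul_div_cancel₀ _ (ne_of_gt hk.2)]
  rw [key]
  apply Finset.sum_le_sum
  intro k hk
  simp only [Finset.mem_filter] at hk
  exact mul_le_mul_of_nonneg_left (le_ciSup (hbdd k hk.2) a) (le_of_lt hk.2)
end

section
/- Bayes-optimality of the majority rule: fix a real ρ with 1/2 < ρ ≤ 1 and an odd natural number n. Let maj_n : (Fin n → Bool) → Bool be the rule that outputs the bit occurring in more than n/2 of the signals. Then for every decision rule f : (Fin n → Bool) → Bool, P_n(maj_n) ≥ P_n(f); in particular P*(n) = P_n(maj_n), so the supremum over rules of the success probability is attained by majority. -/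
open Finset

/-- The weight that the distribution `μ_n` puts on the outcome `(b, s)`:
the bit `b` is uniform on `Bool`, and conditional on `b` the signals are
independent, each equal to `b` with probability `ρ`. -/
noncomputable def signalWeight (ρ : ℝ) (n : ℕ) (b : Bool) (s : Fin n → Bool) : ℝ :=
  (1 / 2) * ∏ i : Fin n, (if s i = b then ρ else 1 - ρ)

/-- The success probability `P_n(f) = μ_n {(b, s) : f s = b}` of a decision
rule `f`. -/
noncomputable def successProb (ρ : ℝ) (n : ℕ) (f : (Fin n → Bool) → Bool) : ℝ :=
  ∑ b : Bool, ∑ s : Fin n → Bool, if f s = b then signalWeight ρ n b s else 0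

/-- The majority rule: output the bit occurring in more than `n / 2` of the
`n` signals. -/
def maj (n : ℕ) (s : Fin n → Bool) : Bool :=
  decide (n < 2 * (Finset.univ.filter (fun i : Fin n => s i = true)).card)

lemma successProb_eq (ρ : ℝ) (n : ℕ) (f : (Fin n → Bool) → Bool) :
    successProb ρ n f = ∑ s : Fin n → Bool, signalWeight ρ n (f s) s := by
  rw [successProb, Finset.sum_comm]
  simp

lemma pow_ineq (ρ : ℝ) (hρ : 1 / 2 < ρ) (hρ1 : ρ ≤ 1) {j k : ℕ} (h : j ≤ k) :
    ρ ^ j * (1 - ρ) ^ k ≤ ρ ^ k * (1 - ρ) ^ j := by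
  obtain ⟨d, rfl⟩ := Nat.exists_eq_add_of_le h
  rw [pow_add, pow_add]
  have h1 : (0:ℝ) ≤ 1 - ρ := by linarith
  have h2 : (1 - ρ) ^ d ≤ ρ ^ d := pow_le_pow_left₀ h1 (by linarith) d
  have h3 : (0:ℝ) ≤ ρ ^ j * (1 - ρ) ^ j := by positivity
  calc ρ ^ j * ((1 - ρ) ^ j * (1 - ρ) ^ d)
      = ρ ^ j * (1 - ρ) ^ j * (1 - ρ) ^ d := by ring
    _ ≤ ρ ^ j * (1 - ρ) ^ j * ρ ^ d := mul_le_mul_of_nonneg_left h2 h3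
    _ = ρ ^ j * ρ ^ d * (1 - ρ) ^ j := by ring

lemma weight_eq (ρ : ℝ) (n : ℕ) (b : Bool) (s : Fin n → Bool) :
    signalWeight ρ n b s =
      (1 / 2) * (ρ ^ (Finset.univ.filter (fun i : Fin n => s i = b)).card
        * (1 - ρ) ^ (n - (Finset.univ.filter (fun i : Fin n => s i = b)).card)) := by
  rw [signalWeight, Finset.prod_ite, Finset.prod_const, Finset.prod_const]
  have := Finset.card_filter_add_card_filter_not
    (s := (Finset.univ : Finset (Fin n))) (p := fun i => s i = b)
  simp only [Finset.card_univ, Fintype.card_fin] at this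
  have h2 : (Finset.univ.filter (fun i : Fin n => ¬ s i = b)).card =
      n - (Finset.univ.filter (fun i : Fin n => s i = b)).card := by omega
  rw [h2]

lemma card_not (n : ℕ) (b : Bool) (s : Fin n → Bool) :
    (Finset.univ.filter (fun i : Fin n => s i = !b)).card =
      n - (Finset.univ.filter (fun i : Fin n => s i = b)).card := by
  have := Finset.card_filter_add_card_filter_not
    (s := (Finset.univ : Finset (Fin n))) (p := fun i => s i = b)
  simp only [Finset.card_univ, Fintype.card_fin] at this
  have he : (Finset.univ.filter (fun i : Fin n => s i = !b)) =
      (Finset.univ.filter (fun i : Fin n => ¬ (s i = b))) := by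
    apply Finset.filter_congr
    intro i _
    cases b <;> cases h : s i <;> simp
  rw [he]
  omega

lemma key (ρ : ℝ) (hρ : 1 / 2 < ρ) (hρ1 : ρ ≤ 1) (n : ℕ) (s : Fin n → Bool)
    (b : Bool) : signalWeight ρ n b s ≤ signalWeight ρ n (maj n s) s := by
  by_cases hb : b = maj n s
  · rw [hb]
  have hb' : b = !(maj n s) := by
    cases b <;> cases h : maj n s <;> simp_all
  subst hb'
  set t := (Finset.univ.filter (fun i : Fin n => s i = true)).card with ht
  have htn : t ≤ n := by
    have := Finset.card_filter_le (Finset.univ : Finset (Fin n))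
      (fun i => s i = true)
    simpa using this
  have hfalse : (Finset.univ.filter (fun i : Fin n => s i = false)).card = n - t := by
    have := card_not n true s
    simpa using this
  have hk : (Finset.univ.filter (fun i : Fin n => s i = maj n s)).card =
      if maj n s then t else n - t := by
    cases h : maj n s <;> simp [hfalse, ht]
  have hkn : (Finset.univ.filter (fun i : Fin n => s i = maj n s)).card ≤ n := by
    have := Finset.card_filter_le (Finset.univ : Finset (Fin n))
      (fun i => s i = maj n s)
    simpa using this
  rw [weight_eq, weight_eq, card_not, Nat.sub_sub_self hkn]
  have hjk : n - (Finset.univ.filter (fun i : Fin n => s i = maj n s)).card ≤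
      (Finset.univ.filter (fun i : Fin n => s i = maj n s)).card := by
    rw [hk]
    rcases Nat.lt_or_ge n (2 * t) with hlt | hge
    · have hm : maj n s = true := by
        simp only [maj, decide_eq_true_eq, ← ht]
        exact hlt
      rw [hm, if_pos rfl]
      omega
    · have hm : maj n s = false := by
        simp only [maj, decide_eq_false_iff_not, not_lt, ← ht]
        exact hge
      rw [hm, if_neg (by simp)]
      omega
  exact mul_le_mul_of_nonneg_left (pow_ineq ρ hρ hρ1 hjk) (by norm_num)


/-- Bayes-optimality of the majority rule: for odd `n`, the majority rule
maximizes the success probability over all decision rules, and hence the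
supremum `P*(n)` is attained by majority. -/
theorem majority_is_bayes_optimal (ρ : ℝ) (hρ : 1 / 2 < ρ) (hρ1 : ρ ≤ 1)
    (n : ℕ) (hn : Odd n) :
    (∀ f : (Fin n → Bool) → Bool, successProb ρ n f ≤ successProb ρ n (maj n)) ∧
    (⨆ f : (Fin n → Bool) → Bool, successProb ρ n f) = successProb ρ n (maj n) := by
  have h1 : ∀ f : (Fin n → Bool) → Bool, successProb ρ n f ≤ successProb ρ n (maj n) := by
    intro f
    rw [successProb_eq, successProb_eq]
    exact Finset.sum_le_sum fun s _ => key ρ hρ hρ1 n s (f s)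
  refine ⟨h1, le_antisymm (ciSup_le h1) ?_⟩
  exact le_ciSup (Set.Finite.bddAbove (Set.finite_range _)) (maj n)
end

section
/- The marginal informational gain of additional signals decays exponentially: fix a real ρ with 1/2 < ρ ≤ 1. For every odd natural number n and every m ≥ n, 0 ≤ P*(m) − P*(n) ≤ exp(−2 · n · (ρ − 1/2)²) (the left inequality says P* is nondecreasing, since a rule on m signals may ignore the extra ones). Consequently, for every c > 0 there exists N such that for all n ≥ N and all m ≥ n, the expected gain in success probability from reading the signals beyond the first n is less than c. -/
/-!
A rule on `m ≥ n` signals may ignore all but `n` of them, so `P*` is nondecreasing, and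
`P* ≤ 1`. It therefore suffices to show that the majority vote on `n` signals errs with
probability at most `exp (-2 n (ρ - 1/2)²)`. An outcome on which it errs has `k` signals
agreeing with the bit and `l ≥ k` disagreeing, so its weight is at most
`ρ^k (1-ρ)^l ≤ (ρ (1-ρ))^(n/2)`; summing over the `2^n` signal vectors leaves
`(4 ρ (1-ρ))^(n/2)`, and `4 ρ (1-ρ) = 1 - 4 (ρ - 1/2)² ≤ exp (-4 (ρ - 1/2)²)`.
-/

open Finset

/-- `P*(n)`: the supremum over all decision rules of the success
probability with `n` signals. -/
noncomputable def Pstar (ρ : ℝ) (n : ℕ) : ℝ :=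
  ⨆ f : (Fin n → Bool) → Bool, successProb ρ n f

open Filter Topology Real

lemma sum_ite_eq_else_one_sub (ρ : ℝ) (b : Bool) :
    ∑ x : Bool, (if x = b then ρ else 1 - ρ) = 1 := by
  cases b <;> simp

lemma sq_pow_mul_pow_le {ρ q : ℝ} (hq : 0 ≤ q) (hqρ : q ≤ ρ) {k l : ℕ} (hkl : k ≤ l) :
    (ρ ^ k * q ^ l) ^ 2 ≤ (ρ * q) ^ (k + l) := by
  obtain ⟨d, rfl⟩ := Nat.exists_eq_add_of_le hkl
  calc (ρ ^ k * q ^ (k + d)) ^ 2 = (ρ * q) ^ (2 * k) * (q * q) ^ d := by ring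
    _ ≤ (ρ * q) ^ (2 * k) * (ρ * q) ^ d := by
      gcongr
      exact pow_nonneg (mul_nonneg (hq.trans hqρ) hq) _
    _ = (ρ * q) ^ (k + (k + d)) := by ring

lemma four_mul_mul_one_sub_le_exp (ρ : ℝ) :
    4 * (ρ * (1 - ρ)) ≤ exp (-(4 * (ρ - 1 / 2) ^ 2)) := by
  nlinarith [add_one_le_exp (-(4 * (ρ - 1 / 2) ^ 2))]

lemma two_pow_mul_pow_mul_pow_le_exp {ρ : ℝ} (hρ : 1 / 2 ≤ ρ) (hρ1 : ρ ≤ 1) {k l : ℕ}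
    (hkl : k ≤ l) :
    2 ^ (k + l) * (ρ ^ k * (1 - ρ) ^ l) ≤ exp (-2 * ↑(k + l) * (ρ - 1 / 2) ^ 2) := by
  have hq : 0 ≤ 1 - ρ := by linarith
  refine (pow_le_pow_iff_left₀ (by positivity) (exp_pos _).le two_ne_zero).1 ?_
  calc (2 ^ (k + l) * (ρ ^ k * (1 - ρ) ^ l)) ^ 2
      = 4 ^ (k + l) * (ρ ^ k * (1 - ρ) ^ l) ^ 2 := by
        rw [mul_pow, ← pow_mul, pow_mul']
        norm_num
    _ ≤ 4 ^ (k + l) * (ρ * (1 - ρ)) ^ (k + l) := by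
      gcongr
      exact sq_pow_mul_pow_le hq (by linarith) hkl
    _ = (4 * (ρ * (1 - ρ))) ^ (k + l) := (mul_pow _ _ _).symm
    _ ≤ exp (-(4 * (ρ - 1 / 2) ^ 2)) ^ (k + l) :=
      pow_le_pow_left₀ (by nlinarith) (four_mul_mul_one_sub_le_exp ρ) _
    _ = exp (-2 * ↑(k + l) * (ρ - 1 / 2) ^ 2) ^ 2 := by
      rw [← exp_nat_mul, ← exp_nat_mul]
      push_cast
      ring_nf

section SignalModel

variable {ρ : ℝ} {n : ℕ}

lemma signalWeight_nonneg (hρ0 : 0 ≤ ρ) (hρ1 : ρ ≤ 1) (b : Bool) (s : Fin n → Bool) :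
    0 ≤ signalWeight ρ n b s :=
  mul_nonneg (by norm_num) (prod_nonneg fun i _ => by split <;> linarith)

lemma signalWeight_eq_pow (b : Bool) (s : Fin n → Bool) :
    signalWeight ρ n b s = 1 / 2 * (ρ ^ #{i | s i = b} * (1 - ρ) ^ #{i | s i ≠ b}) := by
  rw [signalWeight, prod_ite, prod_const, prod_const]

lemma signalWeight_cons (b x : Bool) (t : Fin n → Bool) :
    signalWeight ρ (n + 1) b (Fin.cons x t) =
      (if x = b then ρ else 1 - ρ) * signalWeight ρ n b t := by
  simp only [signalWeight, Fin.prod_univ_succ, Fin.cons_zero, Fin.cons_succ]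
  ring

lemma sum_signalWeight (b : Bool) : ∑ s : Fin n → Bool, signalWeight ρ n b s = 1 / 2 := by
  simp only [signalWeight, ← mul_sum]
  rw [← Fintype.sum_pow (fun x : Bool => if x = b then ρ else 1 - ρ), sum_ite_eq_else_one_sub,
    one_pow, mul_one]

lemma successProb_eq_sum (f : (Fin n → Bool) → Bool) :
    successProb ρ n f = ∑ s, signalWeight ρ n (f s) s := by
  rw [successProb, sum_comm]
  simp

lemma successProb_add_sum_signalWeight_not (f : (Fin n → Bool) → Bool) :
    successProb ρ n f + ∑ s, signalWeight ρ n (!f s) s = 1 := by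
  have hmass : ∑ b : Bool, ∑ s : Fin n → Bool, signalWeight ρ n b s = 1 := by
    simp [sum_signalWeight]
  rw [successProb_eq_sum, ← sum_add_distrib, ← hmass, sum_comm]
  refine sum_congr rfl fun s _ => ?_
  cases f s <;> simp [add_comm]

lemma successProb_le_one (hρ0 : 0 ≤ ρ) (hρ1 : ρ ≤ 1) (f : (Fin n → Bool) → Bool) :
    successProb ρ n f ≤ 1 := by
  linarith [successProb_add_sum_signalWeight_not (ρ := ρ) f,
    sum_nonneg (s := univ) fun s _ => signalWeight_nonneg hρ0 hρ1 (!f s) s]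

lemma successProb_comp_tail (f : (Fin n → Bool) → Bool) :
    successProb ρ (n + 1) (fun s => f (Fin.tail s)) = successProb ρ n f := by
  rw [successProb_eq_sum, successProb_eq_sum,
    ← (Fin.consEquiv fun _ => Bool).sum_comp, Fintype.sum_prod_type, sum_comm]
  refine sum_congr rfl fun t _ => ?_
  simp only [Fin.consEquiv, Equiv.coe_fn_mk, Fin.tail_cons, signalWeight_cons, ← sum_mul,
    sum_ite_eq_else_one_sub, one_mul]

lemma successProb_le_Pstar (f : (Fin n → Bool) → Bool) : successProb ρ n f ≤ Pstar ρ n :=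
  le_ciSup (Set.finite_range _).bddAbove f

lemma Pstar_le_one (hρ0 : 0 ≤ ρ) (hρ1 : ρ ≤ 1) : Pstar ρ n ≤ 1 :=
  ciSup_le (successProb_le_one hρ0 hρ1)

lemma Pstar_mono : Monotone (Pstar ρ) :=
  monotone_nat_of_le_succ fun _ => ciSup_le fun f =>
    successProb_comp_tail (ρ := ρ) f ▸ successProb_le_Pstar _

def majority (s : Fin n → Bool) : Bool :=
  decide (#{i | s i = false} < #{i | s i = true})

lemma card_eq_not_majority_le (s : Fin n → Bool) :
    #{i | s i = !majority s} ≤ #{i | s i = majority s} := by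
  unfold majority
  by_cases h : #{i | s i = false} < #{i | s i = true} <;> simp [h] <;> omega

lemma signalWeight_not_majority_le (hρ : 1 / 2 ≤ ρ) (hρ1 : ρ ≤ 1) (s : Fin n → Bool) :
    signalWeight ρ n (!majority s) s ≤ exp (-2 * n * (ρ - 1 / 2) ^ 2) / 2 ^ n := by
  set k := #{i | s i = !majority s}
  set l := #{i | s i = majority s}
  have hcard : k + l = n := by
    simpa [Bool.ne_not] using card_filter_add_card_filter_not (s := univ) (s · = !majority s)
  have hchernoff := two_pow_mul_pow_mul_pow_le_exp hρ hρ1 (card_eq_not_majority_le s)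
  have hq : 0 ≤ 1 - ρ := by linarith
  have hnonneg : 0 ≤ 2 ^ n * (ρ ^ k * (1 - ρ) ^ l) := by positivity
  rw [hcard] at hchernoff
  rw [signalWeight_eq_pow, le_div_iff₀ (by positivity)]
  simp only [Bool.ne_not]
  linarith

lemma one_sub_exp_le_successProb_majority (hρ : 1 / 2 ≤ ρ) (hρ1 : ρ ≤ 1) :
    1 - exp (-2 * n * (ρ - 1 / 2) ^ 2) ≤ successProb ρ n majority := by
  have herr : ∑ s, signalWeight ρ n (!majority s) s ≤ exp (-2 * n * (ρ - 1 / 2) ^ 2) := by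
    refine (sum_le_sum fun s _ => signalWeight_not_majority_le hρ hρ1 s).trans_eq ?_
    simp only [sum_const, card_univ, Fintype.card_fun, Fintype.card_bool, Fintype.card_fin,
      nsmul_eq_mul]
    push_cast
    field_simp
  linarith [successProb_add_sum_signalWeight_not (ρ := ρ) (majority (n := n))]

lemma Pstar_sub_le_exp (hρ : 1 / 2 ≤ ρ) (hρ1 : ρ ≤ 1) (m n : ℕ) :
    Pstar ρ m - Pstar ρ n ≤ exp (-2 * n * (ρ - 1 / 2) ^ 2) := by
  linarith [Pstar_le_one (n := m) (by linarith) hρ1,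
    successProb_le_Pstar (ρ := ρ) (majority (n := n)),
    one_sub_exp_le_successProb_majority (n := n) hρ hρ1]

end SignalModel

/-- The marginal informational gain of additional signals decays
exponentially: for odd `n` and `m ≥ n`,
`0 ≤ P*(m) − P*(n) ≤ exp(−2 n (ρ − 1/2)²)`; consequently, for every
`c > 0` there is an `N` such that for all `n ≥ N` and `m ≥ n` the gain in
success probability from the signals beyond the first `n` is below `c`. -/
theorem marginal_gain_decays (ρ : ℝ) (hρ : 1 / 2 < ρ) (hρ1 : ρ ≤ 1) :
    (∀ n m : ℕ, Odd n → n ≤ m →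
      0 ≤ Pstar ρ m - Pstar ρ n ∧
      Pstar ρ m - Pstar ρ n ≤ Real.exp (-2 * n * (ρ - 1 / 2) ^ 2)) ∧
    (∀ c : ℝ, 0 < c → ∃ N : ℕ, ∀ n m : ℕ, N ≤ n → n ≤ m →
      Pstar ρ m - Pstar ρ n < c) := by
  refine ⟨fun n m _ hnm => ⟨sub_nonneg.2 (Pstar_mono hnm), Pstar_sub_le_exp hρ.le hρ1 m n⟩,
    fun c hc => ?_⟩
  have hdecay : Tendsto (fun n : ℕ => exp (-2 * n * (ρ - 1 / 2) ^ 2)) atTop (𝓝 0) := by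
    have hrate : 0 < 2 * (ρ - 1 / 2) ^ 2 := by nlinarith
    refine (tendsto_exp_neg_atTop_nhds_zero.comp
      (tendsto_natCast_atTop_atTop.atTop_mul_const hrate)).congr fun n => ?_
    simp only [Function.comp_apply]
    ring_nf
  obtain ⟨N, hN⟩ := eventually_atTop.1 ((tendsto_order.1 hdecay).2 c hc)
  exact ⟨N, fun n m hn _ => (Pstar_sub_le_exp hρ.le hρ1 m n).trans_lt (hN n hn)⟩
end
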